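/- arXiv:2203.13676 — 5 statements merged into one kernel-verified Lean document; each statement's English description precedes it below -/
import Mathlib

section
/- Let p be a prime and let a_{p-1} = Σ_{k=0}^∞ k^{p-1} · 2^{-k}. Then a_{p-1} is an integer divisible by p. Equivalently, p divides Σ_{k=0}^{p-1} S(p-1,k) · k! · 2 where S denotes Stirling numbers of the second kind. -/
def stirling2 : ℕ → ℕ → ℕ
  | 0, 0 => 1
  | 0, _ + 1 => 0
  | _ + 1, 0 => 0
  | n + 1, k + 1 => (k + 1) * stirling2 n (k + 1) + stirling2 n k

/-!
Expanding `k ^ n` in the binomial basis, `k ^ n = ∑ j, S(n, j) j! (k choose j)`, and summing the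
negative binomial series `∑ k, (k choose j) r ^ k = r ^ j / (1 - r) ^ (j + 1)` gives
`∑ k, k ^ n r ^ k = ∑ j, S(n, j) j! r ^ j / (1 - r) ^ (j + 1)`, which is `2 ∑ j, S(n, j) j!` at
`r = 1/2`.

For the divisibility, `j! S(n, j)` is the `j`-th forward difference of `x ↦ x ^ n` at `0`, that is
`∑ i, (-1) ^ (j - i) (j choose i) i ^ n`. For `n = p - 1` and `j < p`, Fermat's little theorem
replaces `i ^ (p - 1)` by `1` except at `i = 0`, so `j! S(p - 1, j) ≡ [j = 0] - (-1) ^ j (mod p)`;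
summing over `j < p` gives `1 - 1 = 0` when `p` is odd, and for `p = 2` the factor `2` suffices.
-/

open Finset Nat

theorem stirling2_eq_stirlingSecond : stirling2 = stirlingSecond := by
  funext n k
  induction n generalizing k with
  | zero => cases k <;> rfl
  | succ n ih => cases k <;> simp [stirling2, stirlingSecond, ih]

namespace Nat

theorem mul_descFactorial_eq_add (k j : ℕ) :
    k * k.descFactorial j = j * k.descFactorial j + k.descFactorial (j + 1) := by
  rcases le_or_gt j k with h | h
  · rw [descFactorial_succ, ← add_mul, Nat.add_sub_cancel' h]
  · simp [descFactorial_eq_zero_iff_lt.2 h]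

theorem pow_eq_sum_stirlingSecond_mul_descFactorial (n k : ℕ) :
    k ^ n = ∑ j ∈ range (n + 1), stirlingSecond n j * k.descFactorial j := by
  induction n with
  | zero => simp
  | succ n ih =>
    have hshift : ∑ j ∈ range (n + 1), (j + 1) * stirlingSecond n (j + 1) * k.descFactorial (j + 1)
        = ∑ j ∈ range (n + 1), j * stirlingSecond n j * k.descFactorial j := by
      have h := sum_range_succ' (fun j => j * stirlingSecond n j * k.descFactorial j) (n + 1)
      rw [sum_range_succ, stirlingSecond_eq_zero_of_lt (lt_add_one n)] at h
      simpa using h.symm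
    calc k ^ (n + 1) = ∑ j ∈ range (n + 1), stirlingSecond n j * (k * k.descFactorial j) := by
          rw [pow_succ, ih, sum_mul]
          exact sum_congr rfl fun j _ => by ring
      _ = ∑ j ∈ range (n + 1), j * stirlingSecond n j * k.descFactorial j
            + ∑ j ∈ range (n + 1), stirlingSecond n j * k.descFactorial (j + 1) := by
          rw [← sum_add_distrib]
          exact sum_congr rfl fun j _ => by rw [mul_descFactorial_eq_add]; ring
      _ = ∑ j ∈ range (n + 1), stirlingSecond (n + 1) (j + 1) * k.descFactorial (j + 1) := by
          rw [← hshift, ← sum_add_distrib]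
          exact sum_congr rfl fun j _ => by rw [stirlingSecond_succ_succ]; ring
      _ = _ := by simp [sum_range_succ' _ (n + 1)]

theorem factorial_mul_stirlingSecond_eq_fwdDiff_iter (n k : ℕ) :
    (k ! * stirlingSecond n k : ℤ) = (fwdDiff 1)^[k] (fun x : ℕ => (x : ℤ) ^ n) 0 := by
  have hpow : (fun x : ℕ => (x : ℤ) ^ n)
      = ∑ j ∈ range (n + 1), (stirlingSecond n j * j ! : ℤ) • fun x : ℕ => (x.choose j : ℤ) := by
    funext x
    simp only [Finset.sum_apply, Pi.smul_apply, smul_eq_mul]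
    exact_mod_cast (pow_eq_sum_stirlingSecond_mul_descFactorial n x).trans
      (sum_congr rfl fun j _ => by rw [descFactorial_eq_factorial_mul_choose]; ring)
  rw [hpow, fwdDiff_iter_finsetSum]
  simp only [Finset.sum_apply, fwdDiff_iter_const_smul, Pi.smul_apply, fwdDiff_iter_choose_zero,
    smul_eq_mul, mul_ite, mul_one, mul_zero, sum_ite_eq, mem_range]
  split_ifs with h
  · ring
  · simp [stirlingSecond_eq_zero_of_lt (by omega : n < k)]

theorem factorial_mul_stirlingSecond_eq_sum (n k : ℕ) :
    (k ! * stirlingSecond n k : ℤ)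
      = ∑ i ∈ range (k + 1), (-1) ^ (k - i) * k.choose i * (i : ℤ) ^ n := by
  simp [factorial_mul_stirlingSecond_eq_fwdDiff_iter, fwdDiff_iter_eq_sum_shift]

end Nat

namespace ZMod

variable {p : ℕ} [Fact p.Prime]

theorem natCast_pow_card_sub_one {i : ℕ} (hi : i < p) :
    (i : ZMod p) ^ (p - 1) = if i = 0 then 0 else 1 := by
  split_ifs with h
  · simp [h, Nat.sub_eq_zero_iff_le, (Fact.out : p.Prime).one_lt]
  · exact pow_card_sub_one_eq_one
      ((natCast_eq_zero_iff i p).not.2 (not_dvd_of_pos_of_lt (pos_of_ne_zero h) hi))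

theorem natCast_factorial_mul_stirlingSecond_sub_one {k : ℕ} (hk : k < p) :
    ((k ! * stirlingSecond (p - 1) k : ℕ) : ZMod p) = (if k = 0 then 1 else 0) - (-1) ^ k := by
  have h := congrArg (Int.cast : ℤ → ZMod p) (factorial_mul_stirlingSecond_eq_sum (p - 1) k)
  push_cast at h ⊢
  rw [h]
  have hterm : ∀ i ∈ range (k + 1), (-1 : ZMod p) ^ (k - i) * k.choose i * (i : ZMod p) ^ (p - 1)
      = (-1) ^ (k - i) * k.choose i - if i = 0 then (-1) ^ k else 0 := by
    intro i hi
    rw [natCast_pow_card_sub_one (by simp at hi; omega)]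
    split_ifs with h0 <;> simp [h0]
  rw [sum_congr rfl hterm, sum_sub_distrib, sum_ite_eq', if_pos (by simp)]
  congr 1
  simpa [zero_pow_eq] using (add_pow (1 : ZMod p) (-1) k).symm

end ZMod

theorem Nat.Prime.dvd_sum_stirlingSecond_mul_factorial {p : ℕ} (hp : p.Prime) (hp2 : p ≠ 2) :
    p ∣ ∑ k ∈ range p, stirlingSecond (p - 1) k * k ! := by
  have := Fact.mk hp
  rw [← ZMod.natCast_eq_zero_iff, cast_sum,
    sum_congr rfl fun k hk => (congrArg _ (mul_comm _ _)).trans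
      (ZMod.natCast_factorial_mul_stirlingSecond_sub_one (mem_range.1 hk)),
    sum_sub_distrib, sum_ite_eq', if_pos (by simp [hp.pos]), neg_one_geom_sum,
    if_neg (by simpa using hp.odd_of_ne_two hp2), sub_self]

section Series

variable {𝕜 : Type*} [NormedField 𝕜] {r : 𝕜}

theorem hasSum_choose_mul_geometric (j : ℕ) (hr : ‖r‖ < 1) :
    HasSum (fun k : ℕ => (k.choose j : 𝕜) * r ^ k) (r ^ j / (1 - r) ^ (j + 1)) := by
  have h := (hasSum_choose_mul_geometric_of_norm_lt_one j hr).mul_left (r ^ j)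
  rw [← hasSum_nat_add_iff' j,
    sum_eq_zero fun i hi => by simp [choose_eq_zero_of_lt (mem_range.1 hi)],
    sub_zero, div_eq_mul_one_div]
  exact h.congr_fun fun k => by rw [add_comm k j]; ring

theorem hasSum_pow_mul_geometric (n : ℕ) (hr : ‖r‖ < 1) :
    HasSum (fun k : ℕ => (k : 𝕜) ^ n * r ^ k)
      (∑ j ∈ range (n + 1), (stirlingSecond n j * j ! : 𝕜) * (r ^ j / (1 - r) ^ (j + 1))) := by
  refine (hasSum_sum fun j _ => (hasSum_choose_mul_geometric j hr).mul_left
    (stirlingSecond n j * j ! : 𝕜)).congr_fun fun k => ?_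
  rw [← cast_pow, pow_eq_sum_stirlingSecond_mul_descFactorial, cast_sum, sum_mul]
  refine sum_congr rfl fun j _ => ?_
  rw [descFactorial_eq_factorial_mul_choose]
  push_cast
  ring

end Series

theorem stmt_15 (p : ℕ) (hp : p.Prime) :
    (∃ m : ℤ, (∑' k : ℕ, (k : ℝ) ^ (p - 1) * 2 ^ (-(k : ℤ))) = (m : ℝ) ∧ (p : ℤ) ∣ m) ∧
    p ∣ ∑ k ∈ Finset.range p, stirling2 (p - 1) k * Nat.factorial k * 2 := by
  have hdvd : p ∣ ∑ k ∈ range p, stirling2 (p - 1) k * k ! * 2 := by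
    rw [stirling2_eq_stirlingSecond, ← sum_mul]
    rcases eq_or_ne p 2 with rfl | hp2
    · exact dvd_mul_left 2 _
    · exact dvd_mul_of_dvd_left (hp.dvd_sum_stirlingSecond_mul_factorial hp2) 2
  refine ⟨⟨(∑ k ∈ range p, stirling2 (p - 1) k * k ! * 2 : ℕ), ?_, by exact_mod_cast hdvd⟩, hdvd⟩
  have hsum := hasSum_pow_mul_geometric (p - 1) (r := (2⁻¹ : ℝ)) (by norm_num)
  rw [Nat.sub_add_cancel hp.one_le] at hsum
  simp only [zpow_neg, zpow_natCast, ← inv_pow, hsum.tsum_eq, stirling2_eq_stirlingSecond]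
  push_cast
  refine sum_congr rfl fun j _ => ?_
  field_simp
  ring
end

section
/- Let p be a prime and let k be a natural number with 1 ≤ k ≤ p - 1. Then k! · S(p-1, k) ≡ -(-1)^k (mod p), where S(n,k) is the Stirling number of the second kind. -/
open Finset in
lemma stirling_formula (n k : ℕ) :
    ((Nat.factorial k : ℤ) * stirling2 n k) =
      ∑ i ∈ range (k + 1), (-1) ^ i * (k.choose i : ℤ) * ((k - i : ℕ) : ℤ) ^ n := by
  induction n generalizing k with
  | zero =>
    cases k with
    | zero => simp [stirling2]
    | succ k =>
      simp only [stirling2, pow_zero, mul_one, Nat.cast_zero, mul_zero]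
      rw [Int.alternating_sum_range_choose_of_ne (Nat.succ_ne_zero k)]
  | succ n ih =>
    cases k with
    | zero => simp [stirling2]
    | succ k =>
      have key : ∑ i ∈ range (k + 2), (-1) ^ i * ((k+1).choose i : ℤ) * ((k + 1 - i : ℕ) : ℤ) ^ (n+1)
          = (k+1) * ∑ i ∈ range (k + 2), (-1) ^ i * ((k+1).choose i : ℤ) * ((k + 1 - i : ℕ) : ℤ) ^ n
            + (k+1) * ∑ i ∈ range (k + 1), (-1) ^ i * (k.choose i : ℤ) * ((k - i : ℕ) : ℤ) ^ n := by
        have step : ∀ i ∈ range (k + 2),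
            (-1) ^ i * ((k+1).choose i : ℤ) * ((k + 1 - i : ℕ) : ℤ) ^ (n+1)
            = (k+1) * ((-1) ^ i * ((k+1).choose i : ℤ) * ((k + 1 - i : ℕ) : ℤ) ^ n)
              + (-1) ^ i * ((k+1).choose i : ℤ) * (-(i:ℤ)) * ((k + 1 - i : ℕ) : ℤ) ^ n := by
          intro i hi
          rw [mem_range] at hi
          have hle : i ≤ k + 1 := Nat.lt_succ_iff.mp hi
          have hcast : ((k + 1 - i : ℕ) : ℤ) = (k + 1 : ℤ) - i := by
            push_cast [hle]; ring
          rw [pow_succ]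
          nth_rewrite 2 [hcast]
          ring
        rw [Finset.sum_congr rfl step, Finset.sum_add_distrib, ← Finset.mul_sum]
        congr 1
        rw [Finset.sum_range_succ' (fun i => (-1) ^ i * ((k+1).choose i : ℤ) * (-(i:ℤ)) * ((k + 1 - i : ℕ) : ℤ) ^ n)]
        simp only [Nat.cast_zero, neg_zero, mul_zero, zero_mul, add_zero]
        rw [Finset.mul_sum]
        apply Finset.sum_congr rfl
        intro j hj
        have hc : ((k+1).choose (j+1) : ℤ) * (j+1) = (k+1) * (k.choose j : ℤ) := by
          exact_mod_cast (Nat.add_one_mul_choose_eq k j).symm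
        have : (k + 1 - (j + 1) : ℕ) = (k - j : ℕ) := by omega
        rw [this, pow_succ]
        push_cast
        linear_combination ((-1:ℤ)^j * ((k-j:ℕ):ℤ)^n) * hc
      have lhs : ((Nat.factorial (k+1) : ℤ) * stirling2 (n+1) (k+1))
          = (k+1) * ((Nat.factorial (k+1) : ℤ) * stirling2 n (k+1))
            + (k+1) * ((Nat.factorial k : ℤ) * stirling2 n k) := by
        show ((Nat.factorial (k+1) : ℤ) * ((k + 1) * stirling2 n (k + 1) + stirling2 n k)) = _
        rw [Nat.factorial_succ]
        push_cast
        ring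
      rw [lhs, ih (k+1), ih k]
      exact key.symm

theorem stmt_16 (p : ℕ) (hp : p.Prime) (k : ℕ) (hk1 : 1 ≤ k) (hk2 : k ≤ p - 1) :
    ((Nat.factorial k : ℤ) * stirling2 (p - 1) k) ≡ -(-1) ^ k [ZMOD p] := by
  haveI := Fact.mk hp
  have h2 := hp.two_le
  rw [← ZMod.intCast_eq_intCast_iff, stirling_formula]
  push_cast
  rw [Finset.sum_range_succ]
  have hlast : ((k - k : ℕ) : ZMod p) ^ (p - 1) = 0 := by
    simp [zero_pow (by omega : p - 1 ≠ 0)]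
  have hstep : ∀ i ∈ Finset.range k,
      (-1 : ZMod p) ^ i * (k.choose i : ZMod p) * ((k - i : ℕ) : ZMod p) ^ (p - 1)
      = (-1 : ZMod p) ^ i * (k.choose i : ZMod p) := by
    intro i hi
    rw [Finset.mem_range] at hi
    have hne : ((k - i : ℕ) : ZMod p) ≠ 0 := by
      rw [Ne, ZMod.natCast_eq_zero_iff]
      intro hdvd
      have := Nat.le_of_dvd (by omega) hdvd
      omega
    rw [ZMod.pow_card_sub_one_eq_one hne, mul_one]
  rw [Finset.sum_congr rfl hstep, hlast, mul_zero, add_zero]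
  have hz : (∑ i ∈ Finset.range k, (-1 : ℤ) ^ i * (k.choose i : ℤ)) = -(-1) ^ k := by
    have h := Int.alternating_sum_range_choose_of_ne (by omega : k ≠ 0)
    rw [Finset.sum_range_succ, Nat.choose_self] at h
    push_cast at h
    linarith
  have := congrArg (fun x : ℤ => (x : ZMod p)) hz
  push_cast at this
  exact this
end

section
/- Define a_n = Σ_{k=0}^n k! · C(n,k)^2. Then for all n ≥ 2, a_n = 2n · a_{n-1} - (n-1)^2 · a_{n-2}. -/
private def Gm (m : ℕ) : ℕ → ℤ
  | 0 => 0
  | (k+1) => (Nat.factorial k : ℤ) * ((m+1).choose k)^2 *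
      (((m:ℤ)+1-k)^2 - ((m:ℤ)+1-k) - ((m:ℤ)+2))

private lemma choose_succ_int (m s : ℕ) :
    ((s:ℤ)+1) * (m.choose (s+1)) = ((m:ℤ) - s) * (m.choose s) := by
  rcases le_or_gt s m with h | h
  · have := Nat.choose_succ_right_eq m s
    have hc : ((m.choose (s+1) * (s+1) : ℕ) : ℤ) = ((m.choose s * (m - s) : ℕ) : ℤ) := by
      exact_mod_cast congrArg (Nat.cast : ℕ → ℤ) this
    push_cast [Nat.cast_sub h] at hc
    linarith
  · rw [Nat.choose_eq_zero_of_lt h, Nat.choose_eq_zero_of_lt (h.trans (Nat.lt_succ_self s))]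
    simp

private lemma termG (m k : ℕ) :
    (Nat.factorial k : ℤ) * ((m+2).choose k)^2
      - 2*((m:ℤ)+2) * ((Nat.factorial k : ℤ) * ((m+1).choose k)^2)
      + ((m:ℤ)+1)^2 * ((Nat.factorial k : ℤ) * (m.choose k)^2)
      = Gm m (k+1) - Gm m k := by
  match k with
  | 0 => simp [Gm]; ring
  | 1 => simp [Gm, Nat.choose_one_right, Nat.factorial]; ring
  | (j+2) =>
    have h1 := choose_succ_int m (j+1)
    have h2 := choose_succ_int m j
    simp only [Gm, Nat.choose_succ_succ, Nat.factorial_succ]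
    push_cast at h1 h2 ⊢
    have hne : ((((j:ℤ)+2)*((j:ℤ)+1))^2) ≠ 0 := by positivity
    refine mul_left_cancel₀ hne ?_
    set A := (m.choose j : ℤ)
    set B := (m.choose (j+1) : ℤ)
    set C := (m.choose (j+2) : ℤ)
    set M := (m:ℤ)+2
    set K := (j:ℤ)+2
    linear_combination
      ((Nat.factorial j : ℤ) * ((j:ℤ)+1)^3 *
        ((3)*(K)^2*(B) + (2)*(K)^2*(A) + (-3)*(K)^3*(C) + (-2)*(K)^3*(B) + (-1)*(K)^4*(C) + (-1)*(K)^4*(B) + (-1)*(M)*(K)^2*(B) + (2)*(M)*(K)^3*(C) + (1)*(M)*(K)^3*(B))) * h1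
      + ((Nat.factorial j : ℤ) * ((j:ℤ)+1) *
        ((3)*(K)^2*(B) + (2)*(K)^2*(A) + (-5)*(K)^3*(B) + (-3)*(K)^3*(A) + (1)*(K)^4*(B) + (1)*(K)^5*(B) + (1)*(K)^5*(A) + (-2)*(M)*(K)^2*(B) + (-1)*(M)*(K)^2*(A) + (4)*(M)*(K)^3*(B) + (2)*(M)*(K)^3*(A) + (-2)*(M)*(K)^4*(B) + (-1)*(M)*(K)^4*(A))) * h2

theorem stmt_17 (n : ℕ) (hn : 2 ≤ n) :
    (∑ k ∈ Finset.range (n + 1), (Nat.factorial k : ℤ) * (n.choose k) ^ 2)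
      = 2 * n * (∑ k ∈ Finset.range n, (Nat.factorial k : ℤ) * ((n - 1).choose k) ^ 2)
        - (n - 1 : ℤ) ^ 2 * (∑ k ∈ Finset.range (n - 1), (Nat.factorial k : ℤ) * ((n - 2).choose k) ^ 2) := by
  obtain ⟨m, rfl⟩ : ∃ m, n = m + 2 := ⟨n - 2, by omega⟩
  have e1 : m + 2 - 1 = m + 1 := rfl
  have e2 : m + 2 - 2 = m := rfl
  rw [e1, e2]
  have hs2 : (∑ k ∈ Finset.range (m+3), (Nat.factorial k : ℤ) * ((m+1).choose k) ^ 2)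
      = ∑ k ∈ Finset.range (m+2), (Nat.factorial k : ℤ) * ((m+1).choose k) ^ 2 := by
    rw [Finset.sum_range_succ]
    simp [Nat.choose_eq_zero_of_lt]
  have hs3 : (∑ k ∈ Finset.range (m+3), (Nat.factorial k : ℤ) * (m.choose k) ^ 2)
      = ∑ k ∈ Finset.range (m+1), (Nat.factorial k : ℤ) * (m.choose k) ^ 2 := by
    rw [Finset.sum_range_succ, Finset.sum_range_succ]
    simp [Nat.choose_eq_zero_of_lt]
  have main : (∑ k ∈ Finset.range (m+3),
      ((Nat.factorial k : ℤ) * ((m+2).choose k)^2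
        - 2*((m:ℤ)+2) * ((Nat.factorial k : ℤ) * ((m+1).choose k)^2)
        + ((m:ℤ)+1)^2 * ((Nat.factorial k : ℤ) * (m.choose k)^2))) = 0 := by
    calc (∑ k ∈ Finset.range (m+3),
        ((Nat.factorial k : ℤ) * ((m+2).choose k)^2
          - 2*((m:ℤ)+2) * ((Nat.factorial k : ℤ) * ((m+1).choose k)^2)
          + ((m:ℤ)+1)^2 * ((Nat.factorial k : ℤ) * (m.choose k)^2)))
        = ∑ k ∈ Finset.range (m+3), (Gm m (k+1) - Gm m k) :=
          Finset.sum_congr rfl (fun k _ => termG m k)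
      _ = Gm m (m+3) - Gm m 0 := Finset.sum_range_sub (Gm m) (m+3)
      _ = 0 := by simp [Gm, Nat.choose_eq_zero_of_lt]
  rw [Finset.sum_add_distrib, Finset.sum_sub_distrib, ← Finset.mul_sum, ← Finset.mul_sum] at main
  rw [hs2, hs3] at main
  push_cast
  linarith [main]
end

section
/- Define a_n = Σ_{k=0}^n k! · C(n,k)^2. Then for all natural numbers n ≥ 0 and m ≥ 1, a_{n+m} ≡ a_n (mod m). -/
/-!
Since `k! * C(N,k) = N.descFactorial k`, the `k`-th term is `C(N,k) * N.descFactorial k`, and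
for `x = C(n+m,k)`, `y = C(n,k)` the difference of the `k`-th terms factors as
`k! (x² - y²) = (x + y) * ((n+m).descFactorial k - n.descFactorial k)`.
The falling factorial is a polynomial in `N` with integer coefficients, so its values at `n + m`
and `n` are congruent mod `m`; hence every term of `a_{n+m} - a_n` is divisible by `m`.
-/

open Finset Nat

theorem dvd_descFactorial_add_sub_descFactorial (n m k : ℕ) :
    (m : ℤ) ∣ ((n + m).descFactorial k : ℤ) - n.descFactorial k := by
  have h := Polynomial.sub_dvd_eval_sub ((n + m : ℕ) : ℤ) (n : ℤ) (descPochhammer ℤ k)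
  rwa [descPochhammer_eval_eq_descFactorial, descPochhammer_eval_eq_descFactorial, Nat.cast_add,
    add_sub_cancel_left] at h

theorem factorial_mul_choose_sq_sub_factorial_mul_choose_sq (N n k : ℕ) :
    (k ! : ℤ) * (N.choose k : ℤ) ^ 2 - (k ! : ℤ) * (n.choose k : ℤ) ^ 2
      = ((N.choose k : ℤ) + n.choose k) * ((N.descFactorial k : ℤ) - n.descFactorial k) := by
  simp only [Nat.descFactorial_eq_factorial_mul_choose, Nat.cast_mul]
  ring

theorem sum_range_factorial_mul_choose_sq_of_le {n N : ℕ} (h : n ≤ N) :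
    ∑ k ∈ range (N + 1), (k ! : ℤ) * (n.choose k : ℤ) ^ 2
      = ∑ k ∈ range (n + 1), (k ! : ℤ) * (n.choose k : ℤ) ^ 2 := by
  refine (sum_subset (range_subset_range.mpr (by omega)) fun k _ hk => ?_).symm
  rw [Nat.choose_eq_zero_of_lt (by simpa using hk)]
  simp

theorem stmt_18_general (n m : ℕ) :
    (∑ k ∈ Finset.range (n + m + 1), (Nat.factorial k : ℤ) * ((n + m).choose k) ^ 2)
      ≡ (∑ k ∈ Finset.range (n + 1), (Nat.factorial k : ℤ) * (n.choose k) ^ 2) [ZMOD m] := by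
  rw [← sum_range_factorial_mul_choose_sq_of_le (Nat.le_add_right n m),
    Int.modEq_comm, Int.modEq_iff_dvd, ← sum_sub_distrib]
  refine dvd_sum fun k _ => ?_
  rw [factorial_mul_choose_sq_sub_factorial_mul_choose_sq]
  exact dvd_mul_of_dvd_right (dvd_descFactorial_add_sub_descFactorial n m k) _

theorem stmt_18 (n m : ℕ) (hm : 1 ≤ m) :
    (∑ k ∈ Finset.range (n + m + 1), (Nat.factorial k : ℤ) * ((n + m).choose k) ^ 2)
      ≡ (∑ k ∈ Finset.range (n + 1), (Nat.factorial k : ℤ) * (n.choose k) ^ 2) [ZMOD m] :=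
  stmt_18_general n m
end

section
/- Define a_n = Σ_{k=0}^n k! · C(n,k)^2. Then for all m ≥ 1, a_m ≡ 1 (mod m) and a_{m+1} ≡ 2 (mod m). -/
lemma key_aux (m k : ℕ) (hm : 1 ≤ m) :
    (k + 1) * m.choose (k + 1) = m * (m - 1).choose k := by
  have h := Nat.add_one_mul_choose_eq (m - 1) k
  simp only [Nat.succ_eq_add_one, Nat.sub_add_cancel hm] at h
  rw [mul_comm]
  exact h.symm

lemma keyZ (m k : ℕ) (hm : 1 ≤ m) :
    ((k : ℤ) + 1) * m.choose (k + 1) = (m : ℤ) * (m - 1 : ℕ).choose k := by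
  exact_mod_cast congrArg (Nat.cast : ℕ → ℤ) (key_aux m k hm)

lemma dvd_term (m k : ℕ) (hm : 1 ≤ m) :
    (m : ℤ) ∣ (Nat.factorial (k + 1) : ℤ) * (m.choose (k + 1)) ^ 2 := by
  have h : (Nat.factorial (k + 1) : ℤ) * (m.choose (k + 1)) ^ 2
      = (Nat.factorial k : ℤ) * ((k + 1) * m.choose (k + 1)) * m.choose (k + 1) := by
    rw [Nat.factorial_succ]; push_cast; ring
  rw [h, keyZ m k hm]
  exact ⟨(Nat.factorial k : ℤ) * (m - 1 : ℕ).choose k * m.choose (k + 1), by ring⟩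

lemma dvd_cross (m k : ℕ) (hm : 1 ≤ m) :
    (m : ℤ) ∣ (Nat.factorial k : ℤ) * m.choose k * m.choose (k + 1) := by
  cases k with
  | zero => simp [key_aux m 0 hm]
  | succ j =>
    have h : (Nat.factorial (j + 1) : ℤ) * m.choose (j + 1) * m.choose (j + 2)
        = (Nat.factorial j : ℤ) * ((j + 1) * m.choose (j + 1)) * m.choose (j + 2) := by
      rw [Nat.factorial_succ]; push_cast; ring
    rw [h, keyZ m j hm]
    exact ⟨(Nat.factorial j : ℤ) * (m - 1 : ℕ).choose j * m.choose (j + 2), by ring⟩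

lemma part1 (m : ℕ) (hm : 1 ≤ m) :
    (∑ k ∈ Finset.range (m + 1), (Nat.factorial k : ℤ) * (m.choose k) ^ 2) ≡ 1 [ZMOD m] := by
  rw [Finset.sum_range_succ']
  simp only [Nat.choose_zero_right, Nat.factorial_zero]
  have : (∑ k ∈ Finset.range m, (Nat.factorial (k + 1) : ℤ) * (m.choose (k + 1)) ^ 2)
      ≡ 0 [ZMOD m] := by
    apply (Int.modEq_iff_dvd).2
    simp only [zero_sub, dvd_neg]
    exact Finset.dvd_sum fun k _ => dvd_term m k hm
  simpa using this.add_right 1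

theorem stmt_19 (m : ℕ) (hm : 1 ≤ m) :
    (∑ k ∈ Finset.range (m + 1), (Nat.factorial k : ℤ) * (m.choose k) ^ 2) ≡ 1 [ZMOD m] ∧
    (∑ k ∈ Finset.range (m + 2), (Nat.factorial k : ℤ) * ((m + 1).choose k) ^ 2) ≡ 2 [ZMOD m] := by
  refine ⟨part1 m hm, ?_⟩
  rw [Finset.sum_range_succ']
  simp only [Nat.choose_zero_right, Nat.factorial_zero]
  have hterm : ∀ k, (Nat.factorial (k + 1) : ℤ) * ((m + 1).choose (k + 1)) ^ 2
      ≡ (Nat.factorial k : ℤ) * (m.choose k) ^ 2 [ZMOD m] := by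
    intro k
    have h1 : (m + 1) * m.choose k = (m + 1).choose (k + 1) * (k + 1) := by
      exact Nat.add_one_mul_choose_eq m k
    have h1Z : ((k : ℤ) + 1) * ((m + 1).choose (k + 1) : ℤ) = ((m : ℤ) + 1) * m.choose k := by
      have := congrArg (Nat.cast : ℕ → ℤ) h1
      push_cast at this
      linarith [this]
    have heq : (Nat.factorial (k + 1) : ℤ) * ((m + 1).choose (k + 1)) ^ 2
        = (Nat.factorial k : ℤ) * ((m : ℤ) + 1) * m.choose k * (m + 1).choose (k + 1) := by
      calc (Nat.factorial (k + 1) : ℤ) * ((m + 1).choose (k + 1)) ^ 2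
          = (Nat.factorial k : ℤ) * (((k : ℤ) + 1) * ((m + 1).choose (k + 1) : ℤ))
            * (m + 1).choose (k + 1) := by rw [Nat.factorial_succ]; push_cast; ring
        _ = _ := by rw [h1Z]; ring
    rw [heq]
    have hm1 : ((m : ℤ) + 1) ≡ 1 [ZMOD m] := by
      simpa using (Int.modEq_iff_dvd.2 (by simp : (m:ℤ) ∣ (m:ℤ) + 1 - 1))
    have step1 : (Nat.factorial k : ℤ) * ((m : ℤ) + 1) * m.choose k * (m + 1).choose (k + 1)
        ≡ (Nat.factorial k : ℤ) * 1 * m.choose k * (m + 1).choose (k + 1) [ZMOD m] :=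
      (((Int.ModEq.refl _).mul hm1).mul (Int.ModEq.refl _)).mul (Int.ModEq.refl _)
    have hsucc : ((m + 1).choose (k + 1) : ℤ) = m.choose k + m.choose (k + 1) := by
      rw [Nat.choose_succ_succ]; push_cast; ring
    have step2 : (Nat.factorial k : ℤ) * 1 * m.choose k * (m + 1).choose (k + 1)
        = (Nat.factorial k : ℤ) * (m.choose k) ^ 2
          + (Nat.factorial k : ℤ) * m.choose k * m.choose (k + 1) := by
      rw [hsucc]; ring
    have step3 : (Nat.factorial k : ℤ) * (m.choose k) ^ 2
          + (Nat.factorial k : ℤ) * m.choose k * m.choose (k + 1)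
        ≡ (Nat.factorial k : ℤ) * (m.choose k) ^ 2 + 0 [ZMOD m] :=
      (Int.ModEq.refl _).add ((Int.modEq_iff_dvd.2 (by simpa using dvd_cross m k hm)))
    calc (Nat.factorial k : ℤ) * ((m : ℤ) + 1) * m.choose k * (m + 1).choose (k + 1)
        ≡ (Nat.factorial k : ℤ) * 1 * m.choose k * (m + 1).choose (k + 1) [ZMOD m] := step1
      _ = _ := step2
      _ ≡ (Nat.factorial k : ℤ) * (m.choose k) ^ 2 + 0 [ZMOD m] := step3
      _ = (Nat.factorial k : ℤ) * (m.choose k) ^ 2 := by ring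
  have hsum : (∑ k ∈ Finset.range (m + 1), (Nat.factorial (k + 1) : ℤ) * ((m + 1).choose (k + 1)) ^ 2)
      ≡ (∑ k ∈ Finset.range (m + 1), (Nat.factorial k : ℤ) * (m.choose k) ^ 2) [ZMOD m] := by
    apply Int.modEq_iff_dvd.2
    rw [← Finset.sum_sub_distrib]
    exact Finset.dvd_sum fun k _ => Int.modEq_iff_dvd.1 (hterm k)
  have := (hsum.trans (part1 m hm)).add_right 1
  simpa using this
end
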